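/- Let D be a finite set of positive integers, q : D → ℝ with q_k > 0 for all k ∈ D and Σ_{k∈D} q_k = 1, and let c_k > 0 for each k ∈ D. For each k ∈ D let w_k : [0,1] → [0,1] satisfy w_k(1) = 1 and lim_{s→0+} (1 − w_k(1 − s))/s = ∞ (unbounded steepness of the probability weighting function near 1). Let δ* be a degree-based equilibrium of the game with perceived costs J^w_k(δ) = w_k(x_k(δ)) + c_k δ_k on strategy sets Δ_k = [0, 1/c_k]. Then δ*_k > 0 for every k ∈ D, irrespective of the values of the costs c_k. -/

import Mathlib

open Classical in
/-- The endemic-state neighbor infection probability `v(δ)`: a solution `v ∈ (0,1]` of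
the consistency equation `Σ_{i∈D} i q_i / (δ_i + i v) = 1` if one exists (it is then
unique for nonnegative curing rates), and `0` otherwise. -/
noncomputable def vstar (D : Finset ℕ) (q : ℕ → ℝ) (δ : ℕ → ℝ) : ℝ :=
  if h : ∃ v : ℝ, v ∈ Set.Ioc (0 : ℝ) 1 ∧
      ∑ i ∈ D, (i : ℝ) * q i / (δ i + (i : ℝ) * v) = 1 then h.choose else 0

/-- The steady-state infection probability of degree-`k` nodes:
`x_k(δ) = k v(δ) / (δ_k + k v(δ))` if `v(δ) > 0`, and `0` otherwise. -/
noncomputable def xinf (D : Finset ℕ) (q : ℕ → ℝ) (δ : ℕ → ℝ) (k : ℕ) : ℝ :=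
  if 0 < vstar D q δ then (k : ℝ) * vstar D q δ / (δ k + (k : ℝ) * vstar D q δ) else 0

/-!
If degree `k` did not cure at all, its nodes would be infected with probability `x_k = 1`,
at perceived cost `w_k(1) = 1`. After a deviation to a small rate `s > 0` the `k`-th summand
of the consistency equation forces `k q_k ≤ s + k v`, so `1 - x_k = s / (s + k v)` is of exact
order `s`. Unbounded steepness of `w_k` at `1` then lowers the perceived probability by more
than any multiple of `s`, in particular by more than the curing cost `c_k s`.
-/

open Filter Topology Set

noncomputable def consistencySum (D : Finset ℕ) (q δ : ℕ → ℝ) (v : ℝ) : ℝ :=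
  ∑ i ∈ D, (i : ℝ) * q i / (δ i + (i : ℝ) * v)

section Consistency

variable {D : Finset ℕ} {q δ : ℕ → ℝ}

lemma vstar_spec (h : ∃ v ∈ Ioc (0 : ℝ) 1, consistencySum D q δ v = 1) :
    vstar D q δ ∈ Ioc (0 : ℝ) 1 ∧ consistencySum D q δ (vstar D q δ) = 1 := by
  unfold consistencySum at h ⊢
  rw [vstar, dif_pos h]
  exact h.choose_spec

lemma consistencySum_one_le (hq : ∀ i ∈ D, 0 ≤ q i) (hqsum : ∑ i ∈ D, q i = 1)
    (hδ : ∀ i ∈ D, 0 ≤ δ i) : consistencySum D q δ 1 ≤ 1 := by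
  refine le_trans (Finset.sum_le_sum fun i hi => ?_) hqsum.le
  rw [mul_one]
  exact div_le_of_le_mul₀ (add_nonneg (hδ i hi) i.cast_nonneg) (hq i hi)
    (by nlinarith [hq i hi, hδ i hi])

lemma div_le_consistencySum (hq : ∀ i ∈ D, 0 ≤ q i) (hδ : ∀ i ∈ D, 0 ≤ δ i)
    {v : ℝ} (hv : 0 < v) {k : ℕ} (hk : k ∈ D) :
    (k : ℝ) * q k / (δ k + k * v) ≤ consistencySum D q δ v :=
  Finset.single_le_sum (f := fun i : ℕ => (i : ℝ) * q i / (δ i + i * v))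
    (fun i hi => by have := hq i hi; have := hδ i hi; positivity) hk

lemma continuousOn_consistencySum (hD : ∀ i ∈ D, 0 < i) (hδ : ∀ i ∈ D, 0 ≤ δ i) :
    ContinuousOn (consistencySum D q δ) (Ioi 0) := by
  refine continuousOn_finsetSum D fun i hi => ?_
  refine continuousOn_const.div (by fun_prop) fun v (hv : 0 < v) => ?_
  have : (0 : ℝ) < i := by exact_mod_cast hD i hi
  have := hδ i hi
  positivity

variable (hD : ∀ i ∈ D, 0 < i) (hq : ∀ i ∈ D, 0 ≤ q i) (hqsum : ∑ i ∈ D, q i = 1)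
  (hδ : ∀ i ∈ D, 0 ≤ δ i) {k : ℕ} (hk : k ∈ D) (hδk : δ k < k * q k)
include hD hq hqsum hδ hk hδk

/-- Intermediate value theorem on `[v₀, 1]` with `v₀ = q_k - δ_k / k`, where the `k`-th summand
alone already equals `1`. -/
lemma exists_consistencySum_eq_one : ∃ v ∈ Ioc (0 : ℝ) 1, consistencySum D q δ v = 1 := by
  have hk0 : (0 : ℝ) < k := by exact_mod_cast hD k hk
  set v₀ := q k - δ k / k
  have hv₀ : 0 < v₀ := by rw [sub_pos, div_lt_iff₀' hk0]; exact hδk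
  have hv₀1 : v₀ ≤ 1 := by
    have := div_nonneg (hδ k hk) hk0.le
    linarith [hqsum ▸ Finset.single_le_sum hq hk]
  have hlo : 1 ≤ consistencySum D q δ v₀ := by
    have hden : δ k + k * v₀ = k * q k := by
      simp only [v₀]
      field_simp
      ring
    refine le_of_eq_of_le ?_ (div_le_consistencySum hq hδ hv₀ hk)
    rw [hden, div_self (by linarith [hδ k hk])]
  obtain ⟨v, hv, hv1⟩ := intermediate_value_Icc' hv₀1
    ((continuousOn_consistencySum hD hδ).mono fun v hv => hv₀.trans_le hv.1)
    ⟨consistencySum_one_le hq hqsum hδ, hlo⟩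
  exact ⟨v, ⟨hv₀.trans_le hv.1, hv.2⟩, hv1⟩

lemma vstar_mem_Ioc_of_lt : vstar D q δ ∈ Ioc (0 : ℝ) 1 :=
  (vstar_spec (exists_consistencySum_eq_one hD hq hqsum hδ hk hδk)).1

lemma mul_le_add_mul_vstar_of_lt : (k : ℝ) * q k ≤ δ k + k * vstar D q δ := by
  obtain ⟨hv, hsum⟩ := vstar_spec (exists_consistencySum_eq_one hD hq hqsum hδ hk hδk)
  have hle := hsum ▸ div_le_consistencySum hq hδ hv.1 hk
  have : (0 : ℝ) < k := by exact_mod_cast hD k hk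
  have := hδ k hk
  rwa [div_le_one (by nlinarith [hv.1])] at hle

end Consistency

lemma one_sub_xinf {D : Finset ℕ} {q δ : ℕ → ℝ} {k : ℕ} (hv : 0 < vstar D q δ) (hk : 0 < k)
    (hδk : 0 ≤ δ k) : 1 - xinf D q δ k = δ k / (δ k + k * vstar D q δ) := by
  have : (0 : ℝ) < k := by exact_mod_cast hk
  have hden : δ k + k * vstar D q δ ≠ 0 := by positivity
  rw [xinf, if_pos hv]
  field_simp
  ring

lemma eventually_le_one_sub_mul {g : ℝ → ℝ}
    (hg : Tendsto (fun s : ℝ => (1 - g (1 - s)) / s) (𝓝[>] 0) atTop) (C : ℝ) :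
    ∀ᶠ r in 𝓝[>] 0, g (1 - r) ≤ 1 - C * r := by
  filter_upwards [hg.eventually_ge_atTop C, self_mem_nhdsWithin] with r hr (hr0 : 0 < r)
  rw [le_div_iff₀ hr0] at hr
  linarith

section Deviation

variable {D : Finset ℕ} {q δ : ℕ → ℝ} (hD : ∀ i ∈ D, 0 < i) (hq : ∀ i ∈ D, 0 ≤ q i)
  (hqsum : ∑ i ∈ D, q i = 1) (hδ : ∀ i ∈ D, 0 ≤ δ i) {k : ℕ} (hk : k ∈ D)
include hD hq hqsum hδ hk

lemma one_sub_xinf_update_bounds {s : ℝ} (hs : 0 < s) (hsk : s < k * q k) :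
    s / (s + k) ≤ 1 - xinf D q (Function.update δ k s) k ∧
      1 - xinf D q (Function.update δ k s) k ≤ s / (k * q k) := by
  have hδ' : ∀ i ∈ D, 0 ≤ Function.update δ k s i := by
    intro i hi
    rcases eq_or_ne i k with rfl | hne
    · simpa using hs.le
    · simpa [hne] using hδ i hi
  have hlt : Function.update δ k s k < k * q k := by simpa using hsk
  obtain ⟨hv0, hv1⟩ := vstar_mem_Ioc_of_lt hD hq hqsum hδ' hk hlt
  have hlow := mul_le_add_mul_vstar_of_lt hD hq hqsum hδ' hk hlt
  rw [one_sub_xinf hv0 (hD k hk) (hδ' k hk)]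
  simp only [Function.update_self] at hlow ⊢
  have : (0 : ℝ) < k := by exact_mod_cast hD k hk
  exact ⟨div_le_div_of_nonneg_left hs.le (by positivity) (by nlinarith),
    div_le_div_of_nonneg_left hs.le (by linarith) hlow⟩

lemma tendsto_one_sub_xinf_update (hqk : 0 < q k) :
    Tendsto (fun s : ℝ => 1 - xinf D q (Function.update δ k s) k) (𝓝[>] 0) (𝓝[>] 0) := by
  have hkq : (0 : ℝ) < k * q k := mul_pos (by exact_mod_cast hD k hk) hqk
  have hbounds : ∀ᶠ s : ℝ in 𝓝[>] 0, 0 < s / (s + k) ∧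
      s / (s + k) ≤ 1 - xinf D q (Function.update δ k s) k ∧
      1 - xinf D q (Function.update δ k s) k ≤ s / (k * q k) := by
    filter_upwards [Ioo_mem_nhdsGT hkq] with s hs
    exact ⟨by have := hs.1; positivity, one_sub_xinf_update_bounds hD hq hqsum hδ hk hs.1 hs.2⟩
  have hupper : Tendsto (fun s : ℝ => s / (k * q k)) (𝓝[>] 0) (𝓝 0) := by
    simpa using ((continuous_id.div_const ((k : ℝ) * q k)).tendsto 0).mono_left
      nhdsWithin_le_nhds
  rw [tendsto_nhdsWithin_iff]
  exact ⟨tendsto_of_tendsto_of_tendsto_of_le_of_le' tendsto_const_nhds hupper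
      (hbounds.mono fun s hs => hs.1.le.trans hs.2.1) (hbounds.mono fun s hs => hs.2.2),
    hbounds.mono fun s hs => hs.1.trans_le hs.2.1⟩

lemma exists_update_add_mul_lt_one (hqk : 0 < q k) {g : ℝ → ℝ}
    (hg : Tendsto (fun s : ℝ => (1 - g (1 - s)) / s) (𝓝[>] 0) atTop) {c : ℝ} (hc : 0 < c) :
    ∃ s ∈ Icc 0 (1 / c), g (xinf D q (Function.update δ k s) k) + c * s < 1 := by
  have hk0 : (0 : ℝ) < k := by exact_mod_cast hD k hk
  have hsmall : ∀ᶠ s : ℝ in 𝓝[>] 0, s ∈ Ioo 0 (min (k * q k) (min 1 (1 / c))) :=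
    Ioo_mem_nhdsGT (by positivity)
  obtain ⟨s, hgs, hs0, hs⟩ := (((tendsto_one_sub_xinf_update hD hq hqsum hδ hk hqk).eventually
    (eventually_le_one_sub_mul hg ((c + 1) * (k + 1)))).and hsmall).exists
  simp only [lt_min_iff, sub_sub_cancel] at hs hgs
  obtain ⟨hsk, hs1, hsc⟩ := hs
  refine ⟨s, ⟨hs0.le, hsc.le⟩, ?_⟩
  set r := 1 - xinf D q (Function.update δ k s) k
  have hsr : s ≤ (k + 1) * r := by
    have hlow := (one_sub_xinf_update_bounds hD hq hqsum hδ hk hs0 hsk).1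
    rw [div_le_iff₀ (by positivity)] at hlow
    nlinarith
  calc g (xinf D q (Function.update δ k s) k) + c * s
      ≤ 1 - (c + 1) * ((k + 1) * r) + c * s := by linarith
    _ ≤ 1 - (c + 1) * s + c * s := by gcongr
    _ < 1 := by linarith

end Deviation

/-- Suppose each degree class `k` has a probability weighting
function `w_k` with `w_k(1) = 1` whose steepness near `1` is unbounded:
`(1 - w_k(1-s))/s → ∞` as `s → 0⁺`. Then at any degree-based equilibrium of the game
with perceived costs `J^w_k(δ) = w_k(x_k(δ)) + c_k δ_k` on strategy sets `[0, 1/c_k]`,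
every degree chooses a strictly positive curing rate, irrespective of the (finite)
per-unit costs `c_k > 0`. -/
theorem dbe_positive_under_probability_weighting
    (D : Finset ℕ) (hD : ∀ k ∈ D, 0 < k)
    (q : ℕ → ℝ) (hq : ∀ k ∈ D, 0 < q k) (hqsum : ∑ k ∈ D, q k = 1)
    (c : ℕ → ℝ) (hc : ∀ k ∈ D, 0 < c k)
    (w : ℕ → ℝ → ℝ)
    (hw1 : ∀ k ∈ D, w k 1 = 1)
    (hwsteep : ∀ k ∈ D,
      Filter.Tendsto (fun s : ℝ => (1 - w k (1 - s)) / s)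
        (nhdsWithin 0 (Set.Ioi 0)) Filter.atTop)
    (δstar : ℕ → ℝ)
    (hfeas : ∀ k ∈ D, δstar k ∈ Set.Icc (0 : ℝ) (1 / c k))
    (hdbe : ∀ k ∈ D, ∀ s ∈ Set.Icc (0 : ℝ) (1 / c k),
      w k (xinf D q δstar k) + c k * δstar k
        ≤ w k (xinf D q (Function.update δstar k s) k) + c k * s) :
    ∀ k ∈ D, 0 < δstar k := by
  intro k hk
  by_contra! hk0
  have hq' : ∀ i ∈ D, 0 ≤ q i := fun i hi => (hq i hi).le
  have hδ : ∀ i ∈ D, 0 ≤ δstar i := fun i hi => (hfeas i hi).1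
  have hδk : δstar k = 0 := le_antisymm hk0 (hδ k hk)
  have hx : xinf D q δstar k = 1 := by
    have hlt : δstar k < k * q k := hδk ▸ mul_pos (by exact_mod_cast hD k hk) (hq k hk)
    have := one_sub_xinf (vstar_mem_Ioc_of_lt hD hq' hqsum hδ hk hlt).1 (hD k hk) (hδ k hk)
    rw [hδk, zero_div] at this
    linarith
  obtain ⟨s, hs, hlt⟩ :=
    exists_update_add_mul_lt_one hD hq' hqsum hδ hk (hq k hk) (hwsteep k hk) (hc k hk)
  have := hdbe k hk s hs
  rw [hx, hw1 k hk, hδk, mul_zero, add_zero] at this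
  linarith
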